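/- arXiv:1501.01209 — 2 statements merged into one kernel-verified Lean document; each statement's English description precedes it below -/
import Mathlib

section
/- If there exists a locally non-satiated utility function u : ℝ^m → ℝ such that for every t ∈ {1,…,T} the action x_t maximizes u over the budget set {x ∈ ℝ^m : p_t·x ≤ p_t·x_t}, then there exists a continuous, concave, strictly monotone utility function u' : ℝ^m → ℝ (x ≤ y componentwise with x ≠ y implies u'(x) < u'(y)) such that for every t, x_t maximizes u' over the same budget set {x : p_t·x ≤ p_t·x_t}. -/
/-!
Local non-satiation makes revealed preference strict: if `x s` lies strictly inside the budget
of `t`, some better bundle near `x s` is still affordable at `t`, so `u (x s) < u (x t)`.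
Ranking the observations by `u` and putting observation `t` at the level `-K ^ n t` with
multiplier `K ^ n t / d` (`n t` the number of strictly better observations, `d` the least
positive gap `p t ⬝ x s - p t ⬝ x t`, `K` large) solves
Afriat's inequalities `v s ≤ v t + lam t * (p t ⬝ x s - p t ⬝ x t)`. The minimum of the affine
functions `v t + lam t * (p t ⬝ y - p t ⬝ x t)` is continuous, concave and strictly monotone, and
by those inequalities it equals `v t` at `x t`, so it rationalizes the data.
-/

/-- Dot product of two vectors in `ℝ^m`. -/
def dotp {m : ℕ} (p x : Fin m → ℝ) : ℝ := ∑ i, p i * x i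

open Finset Topology

section Dotp

variable {m : ℕ}

@[fun_prop]
lemma continuous_dotp (p : Fin m → ℝ) : Continuous (dotp p) :=
  continuous_const.dotProduct continuous_id

lemma concaveOn_dotp (p : Fin m → ℝ) : ConcaveOn ℝ Set.univ (dotp p) :=
  (dotProductBilin ℝ ℝ p).concaveOn convex_univ

lemma strictMono_dotp {p : Fin m → ℝ} (hp : ∀ i, 0 < p i) : StrictMono (dotp p) := by
  intro y z hyz
  obtain ⟨hle, i, hi⟩ := Pi.lt_def.1 hyz
  exact sum_lt_sum (fun j _ => mul_le_mul_of_nonneg_left (hle j) (hp j).le)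
    ⟨i, mem_univ i, mul_lt_mul_of_pos_left hi (hp i)⟩

end Dotp

section FinsetInf'

variable {ι α : Type*} {s : Finset ι}

lemma ConcaveOn.finset_inf' [AddCommMonoid α] [SMul ℝ α] (hs : s.Nonempty) {t : Set α}
    {f : ι → α → ℝ} (hf : ∀ i ∈ s, ConcaveOn ℝ t (f i)) :
    ConcaveOn ℝ t fun y => s.inf' hs (f · y) := by
  simpa only [← Finset.inf'_apply] using inf'_induction hs f (fun _ h₁ _ h₂ => h₁.inf h₂) hf

lemma StrictMono.finset_inf' [Preorder α] (hs : s.Nonempty) {f : ι → α → ℝ}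
    (hf : ∀ i ∈ s, StrictMono (f i)) :
    StrictMono fun y => s.inf' hs (f · y) := by
  intro y z hyz
  obtain ⟨i, hi, hmin⟩ := exists_mem_eq_inf' hs (f · z)
  dsimp only
  rw [hmin]
  exact (inf'_le _ hi).trans_lt (hf i hi hyz)

end FinsetInf'

def LocallyNonsatiated {E : Type*} [SeminormedAddCommGroup E] (u : E → ℝ) : Prop :=
  ∀ (y : E) (ε : ℝ), 0 < ε → ∃ y' : E, ‖y' - y‖ < ε ∧ u y < u y'

lemma LocallyNonsatiated.exists_gt_of_mem_nhds {E : Type*} [SeminormedAddCommGroup E]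
    {u : E → ℝ} (hu : LocallyNonsatiated u) {y : E} {S : Set E} (hS : S ∈ 𝓝 y) :
    ∃ y' ∈ S, u y < u y' := by
  obtain ⟨ε, hε, hball⟩ := Metric.mem_nhds_iff.1 hS
  obtain ⟨y', hy', hlt⟩ := hu y ε hε
  exact ⟨y', hball (mem_ball_iff_norm.2 hy'), hlt⟩

def Rationalizes {ι : Type*} {m : ℕ} (u : (Fin m → ℝ) → ℝ) (p x : ι → Fin m → ℝ) : Prop :=
  ∀ t y, dotp (p t) y ≤ dotp (p t) (x t) → u y ≤ u (x t)

lemma Rationalizes.lt_of_dotp_lt {ι : Type*} {m : ℕ} {u : (Fin m → ℝ) → ℝ}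
    {p x : ι → Fin m → ℝ} (h : Rationalizes u p x) (hu : LocallyNonsatiated u) {t s : ι}
    (hts : dotp (p t) (x s) < dotp (p t) (x t)) : u (x s) < u (x t) := by
  obtain ⟨y, hy, hlt⟩ := hu.exists_gt_of_mem_nhds <|
    (isOpen_lt (continuous_dotp (p t)) continuous_const).mem_nhds hts
  exact hlt.trans_le (h t y (le_of_lt hy))

section AfriatNumbers

variable {ι : Type*}

lemma Finite.exists_nat_reverse_rank [Finite ι] {α : Type*} [LinearOrder α] (w : ι → α) :
    ∃ n : ι → ℕ, (∀ s t, w s ≤ w t → n t ≤ n s) ∧ ∀ s t, w s < w t → n t < n s := by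
  classical
  have := Fintype.ofFinite ι
  refine ⟨fun t => #{r | w t < w r}, fun s t hst => card_le_card ?_, fun s t hst => card_lt_card ?_⟩
  · exact monotone_filter_right _ fun _ _ => hst.trans_lt
  · refine (ssubset_iff_of_subset (monotone_filter_right _ fun _ _ => hst.trans)).2 ⟨t, ?_, ?_⟩ <;>
      simp [hst]

lemma Finite.exists_pos_le_of_pos [Finite ι] (f : ι → ℝ) : ∃ d > 0, ∀ i, 0 < f i → d ≤ f i := by
  rcases isEmpty_or_nonempty ι with hι | hι
  · exact ⟨1, one_pos, fun i => isEmptyElim i⟩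
  let g i := if 0 < f i then f i else 1
  obtain ⟨i₀, hi₀⟩ := Finite.exists_min g
  refine ⟨g i₀, ?_, fun i hi => (hi₀ i).trans_eq (if_pos hi)⟩
  by_cases h : 0 < f i₀ <;> simp [g, h]

/- The levels are spaced geometrically: the jump `K ^ n t * (K - 1)` above level `n t` absorbs
every negative `D t s`, and a positive `D t s ≥ d` pays for the whole height `K ^ n t`. -/
lemma afriat_ineq_of_rank {D : ι → ι → ℝ} {n : ι → ℕ} {K d : ℝ} (hK : 1 ≤ K) (hd : 0 < d)
    (hpos : ∀ t s, 0 < D t s → d ≤ D t s) (hneg : ∀ t s, D t s < 0 → -D t s ≤ (K - 1) * d)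
    (hle : ∀ t s, D t s ≤ 0 → n t ≤ n s) (hlt : ∀ t s, D t s < 0 → n t < n s) (t s : ι) :
    -K ^ n s ≤ -K ^ n t + K ^ n t / d * D t s := by
  have hKt : 0 < K ^ n t / d := div_pos (pow_pos (by linarith) _) hd
  rcases lt_trichotomy (D t s) 0 with hD | hD | hD
  · have hjump : K ^ n t * K ≤ K ^ n s := by
      rw [← pow_succ]; exact pow_le_pow_right₀ hK (hlt t s hD)
    have : -(K ^ n t * (K - 1)) ≤ K ^ n t / d * D t s := by
      calc -(K ^ n t * (K - 1)) = -(K ^ n t / d * ((K - 1) * d)) := by field_simp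
        _ ≤ K ^ n t / d * D t s := by nlinarith [hneg t s hD]
    linarith
  · simpa [hD] using pow_le_pow_right₀ hK (hle t s hD.le)
  · have : K ^ n t ≤ K ^ n t / d * D t s := by
      calc K ^ n t = K ^ n t / d * d := by field_simp
        _ ≤ K ^ n t / d * D t s := mul_le_mul_of_nonneg_left (hpos t s hD) hKt.le
    linarith [pow_pos (zero_lt_one.trans_le hK) (n s)]

theorem exists_afriat_numbers [Finite ι] (D : ι → ι → ℝ) (w : ι → ℝ)
    (hle : ∀ t s, D t s ≤ 0 → w s ≤ w t) (hlt : ∀ t s, D t s < 0 → w s < w t) :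
    ∃ v lam : ι → ℝ, (∀ t, 0 < lam t) ∧ ∀ t s, v s ≤ v t + lam t * D t s := by
  obtain ⟨n, hn_le, hn_lt⟩ := Finite.exists_nat_reverse_rank w
  obtain ⟨d, hd, hpos⟩ := Finite.exists_pos_le_of_pos fun q : ι × ι => D q.1 q.2
  obtain ⟨M, hM⟩ := Finite.exists_le fun q : ι × ι => -D q.1 q.2 / d
  set K := max M 0 + 1
  have hK : 1 ≤ K := by simp [K]
  refine ⟨fun t => -K ^ n t, fun t => K ^ n t / d, fun t => div_pos (by positivity) hd,
    afriat_ineq_of_rank hK hd (fun t s => hpos (t, s)) (fun t s _ => ?_)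
      (fun t s h => hn_le s t (hle t s h)) (fun t s h => hn_lt s t (hlt t s h))⟩
  rw [← div_le_iff₀ hd]
  exact (hM (t, s)).trans (by simp [K])

end AfriatNumbers

section AfriatUtility

variable {ι : Type*} [Fintype ι] [Nonempty ι] {m : ℕ}

noncomputable def afriatUtility (p x : ι → Fin m → ℝ) (v lam : ι → ℝ) (y : Fin m → ℝ) : ℝ :=
  univ.inf' univ_nonempty fun t => v t + lam t * (dotp (p t) y - dotp (p t) (x t))

variable (p x : ι → Fin m → ℝ) (v lam : ι → ℝ)

lemma continuous_afriatUtility : Continuous (afriatUtility p x v lam) :=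
  Continuous.finset_inf'_apply _ fun t _ => by fun_prop

lemma concaveOn_afriatUtility (hlam : ∀ t, 0 < lam t) :
    ConcaveOn ℝ Set.univ (afriatUtility p x v lam) :=
  ConcaveOn.finset_inf' _ fun t _ => (concaveOn_const (v t) convex_univ).add
    (((concaveOn_dotp (p t)).sub (convexOn_const _ convex_univ)).smul (hlam t).le)

lemma strictMono_afriatUtility (hp : ∀ t i, 0 < p t i) (hlam : ∀ t, 0 < lam t) :
    StrictMono (afriatUtility p x v lam) :=
  StrictMono.finset_inf' _ fun t _ y z hyz => by
    have := hlam t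
    gcongr
    exact strictMono_dotp (hp t) hyz

lemma afriatUtility_apply_self
    (hafriat : ∀ t s, v s ≤ v t + lam t * (dotp (p t) (x s) - dotp (p t) (x t))) (t : ι) :
    afriatUtility p x v lam (x t) = v t :=
  le_antisymm ((inf'_le _ (mem_univ t)).trans (by simp)) (le_inf' _ _ fun s _ => hafriat s t)

lemma rationalizes_afriatUtility (hlam : ∀ t, 0 < lam t)
    (hafriat : ∀ t s, v s ≤ v t + lam t * (dotp (p t) (x s) - dotp (p t) (x t))) :
    Rationalizes (afriatUtility p x v lam) p x := by
  intro t y hy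
  rw [afriatUtility_apply_self p x v lam hafriat]
  exact (inf'_le _ (mem_univ t)).trans <|
    add_le_of_nonpos_right (mul_nonpos_of_nonneg_of_nonpos (hlam t).le (sub_nonpos.2 hy))

end AfriatUtility

/-- If a dataset is rationalized by some locally non-satiated utility, then it
is rationalized by a continuous, concave, strictly monotone utility. -/
theorem rationalizable_implies_nice_rationalization {m T : ℕ}
    (p x : Fin T → Fin m → ℝ)
    (hp : ∀ t i, 0 < p t i)
    (u : (Fin m → ℝ) → ℝ)
    (hns : ∀ (y : Fin m → ℝ) (ε : ℝ), 0 < ε → ∃ y' : Fin m → ℝ, ‖y' - y‖ < ε ∧ u y < u y')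
    (hmax : ∀ t : Fin T, ∀ y : Fin m → ℝ,
      dotp (p t) y ≤ dotp (p t) (x t) → u y ≤ u (x t)) :
    ∃ u' : (Fin m → ℝ) → ℝ,
      Continuous u' ∧
      ConcaveOn ℝ Set.univ u' ∧
      (∀ y z : Fin m → ℝ, (∀ i, y i ≤ z i) → y ≠ z → u' y < u' z) ∧
      (∀ t : Fin T, ∀ y : Fin m → ℝ,
        dotp (p t) y ≤ dotp (p t) (x t) → u' y ≤ u' (x t)) := by
  rcases isEmpty_or_nonempty (Fin T) with hT | hT
  · exact ⟨dotp 1, continuous_dotp 1, concaveOn_dotp 1,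
      fun y z hyz hne => strictMono_dotp (fun _ => one_pos) (lt_of_le_of_ne hyz hne), isEmptyElim⟩
  have hrat : Rationalizes u p x := hmax
  obtain ⟨v, lam, hlam, hafriat⟩ :=
    exists_afriat_numbers (fun t s => dotp (p t) (x s) - dotp (p t) (x t)) (u ∘ x)
      (fun t s h => hrat t (x s) (sub_nonpos.1 h))
      (fun t s h => hrat.lt_of_dotp_lt hns (sub_neg.1 h))
  exact ⟨afriatUtility p x v lam, continuous_afriatUtility p x v lam,
    concaveOn_afriatUtility p x v lam hlam,
    fun y z hyz hne => strictMono_afriatUtility p x v lam hp hlam (lt_of_le_of_ne hyz hne),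
    rationalizes_afriatUtility p x v lam hlam hafriat⟩
end

section
/- Suppose the scalars u_t ∈ ℝ and λ_t > 0 (t = 1,…,T) satisfy the Afriat inequalities u_τ − u_t − λ_t p_t·(x_τ − x_t) ≤ 0 for all t, τ ∈ {1,…,T}, and let u(x) = min_{t} { u_t + λ_t p_t·(x − x_t) }. Then the dataset D = {(p_t, x_t)} satisfies the Generalized Axiom of Revealed Preference (GARP): for every k ≤ T, if p_t·x_t ≥ p_t·x_{t+1} for all t ≤ k−1, then p_k·x_k ≤ p_k·x_1. -/
/-- The Generalized Axiom of Revealed Preference: for every `k ≤ T`, if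
`p t ⬝ x t ≥ p t ⬝ x (t+1)` for all `t ≤ k - 1`, then `p k ⬝ x k ≤ p k ⬝ x 1`. -/
def GARP {m T : ℕ} (p x : Fin T → Fin m → ℝ) : Prop :=
  ∀ k : Fin T,
    (∀ t : Fin T, (ht : t < k) →
      dotp (p t) (x ⟨t.val + 1, lt_of_le_of_lt (Nat.succ_le_of_lt ht) k.isLt⟩)
        ≤ dotp (p t) (x t)) →
    dotp (p k) (x k) ≤ dotp (p k) (x ⟨0, lt_of_le_of_lt (Nat.zero_le k.val) k.isLt⟩)

/-!
Along a revealed-preference chain the Afriat numbers `u t` can only decrease: the Afriat inequality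
for the pair `(t, t + 1)` bounds `u (t + 1) - u t` by `lam t` times `p t ⬝ (x (t + 1) - x t) ≤ 0`.
Hence `u k ≤ u 0`, and the inequality for the pair `(k, 0)` with `lam k > 0` then forbids
`p k ⬝ x 0 < p k ⬝ x k`.
-/

lemma Fin.apply_le_apply_zero_of_succ_le {α : Type*} [Preorder α] {T : ℕ} (f : Fin T → α)
    (k : Fin T)
    (hf : ∀ t : Fin T, (ht : t < k) → f ⟨t + 1, (Nat.succ_le_of_lt ht).trans_lt k.is_lt⟩ ≤ f t) :
    f k ≤ f ⟨0, k.pos⟩ := by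
  suffices ∀ n (hn : n ≤ k.val), f ⟨n, hn.trans_lt k.is_lt⟩ ≤ f ⟨0, k.pos⟩ from this k le_rfl
  intro n hn
  induction n with
  | zero => exact le_rfl
  | succ n ih => exact (hf ⟨n, by omega⟩ hn).trans (ih (by omega))

lemma sum_mul_sub_eq_dotp_sub {m : ℕ} (p a b : Fin m → ℝ) :
    ∑ i, p i * (a i - b i) = dotp p a - dotp p b := by
  simp only [dotp, mul_sub, Finset.sum_sub_distrib]

def AfriatInequalities {m T : ℕ} (p x : Fin T → Fin m → ℝ) (u lam : Fin T → ℝ) : Prop :=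
  ∀ t τ : Fin T, u τ - u t - lam t * ∑ i, p t i * (x τ i - x t i) ≤ 0

namespace AfriatInequalities

variable {m T : ℕ} {p x : Fin T → Fin m → ℝ} {u lam : Fin T → ℝ}

lemma sub_le (h : AfriatInequalities p x u lam) (t τ : Fin T) :
    u τ - u t ≤ lam t * (dotp (p t) (x τ) - dotp (p t) (x t)) := by
  have := h t τ
  rw [sum_mul_sub_eq_dotp_sub] at this
  linarith

lemma le_of_dotp_le (h : AfriatInequalities p x u lam) {t τ : Fin T} (hlam : 0 < lam t)
    (hdot : dotp (p t) (x τ) ≤ dotp (p t) (x t)) : u τ ≤ u t :=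
  sub_nonpos.1 <| (h.sub_le t τ).trans <| mul_nonpos_of_nonneg_of_nonpos hlam.le (sub_nonpos.2 hdot)

lemma dotp_le_of_le (h : AfriatInequalities p x u lam) {t τ : Fin T} (hlam : 0 < lam t)
    (hu : u t ≤ u τ) : dotp (p t) (x t) ≤ dotp (p t) (x τ) :=
  sub_nonneg.1 <| (mul_nonneg_iff_of_pos_left hlam).1 <| (sub_nonneg.2 hu).trans (h.sub_le t τ)

end AfriatInequalities

theorem afriat_inequalities_imply_GARP_general {m T : ℕ}
    (p x : Fin T → Fin m → ℝ)
    (u lam : Fin T → ℝ)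
    (hlam : ∀ t, 0 < lam t)
    (hAfriat : ∀ t τ : Fin T,
      u τ - u t - lam t * ∑ i, p t i * (x τ i - x t i) ≤ 0) :
    GARP p x := by
  have h : AfriatInequalities p x u lam := hAfriat
  intro k hchain
  have hu : u k ≤ u ⟨0, k.pos⟩ :=
    Fin.apply_le_apply_zero_of_succ_le u k fun t ht => h.le_of_dotp_le (hlam t) (hchain t ht)
  exact h.dotp_le_of_le (hlam k) hu

/-- If the Afriat inequalities have a feasible solution with positive
multipliers, the dataset satisfies GARP. -/
theorem afriat_inequalities_imply_GARP {m T : ℕ}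
    (p x : Fin T → Fin m → ℝ)
    (hp : ∀ t i, 0 < p t i)
    (u lam : Fin T → ℝ)
    (hlam : ∀ t, 0 < lam t)
    (hAfriat : ∀ t τ : Fin T,
      u τ - u t - lam t * ∑ i, p t i * (x τ i - x t i) ≤ 0) :
    GARP p x :=
  afriat_inequalities_imply_GARP_general p x u lam hlam hAfriat
end
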